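/- Let r ≥ 2 and n ≥ 2 be integers, let H = (V,E) be an n-uniform hypergraph, let p ∈ (0,1), and suppose there exists an injective birth time assignment t : V → [0,1] under which no edge is short (i.e., every edge has length at least (1−p)/r) and no r-chain of edges of H is conflicting. Then H is r-colorable. -/

import Mathlib

/-!
Colour the vertices greedily in increasing order of `t`: a vertex `v` gets the least colour `i`
such that no edge with last vertex `v` has all its other vertices coloured `i`. No edge is
monochromatic, because every edge has a vertex besides its last one. If a vertex got a colour
`≥ r`, then, for `i = r - 1, …, 0`, pick an edge whose last vertex is the current vertex and whose
other vertices all have colour `i`, and move on to its first vertex, which has colour `i`. These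
`r` edges form a conflicting `r`-chain: the vertices of the `i`-th edge have colour `i` except its
last one, whose colour is `i + 1` (or `≥ r` for the top edge), and this forces consecutive edges
to meet only in their shared vertex and non-consecutive ones to be disjoint.
-/

/-- An `n`-uniform hypergraph given by its edge set `E` (a finite family of
`n`-element finite subsets of the vertex set `V`) is `r`-colorable if there is a
coloring of the vertices with `r` colors under which no edge is monochromatic. -/
def IsRColorable {V : Type*} (r : ℕ) (E : Finset (Finset V)) : Prop :=
  ∃ c : V → Fin r, ∀ e ∈ E, ∃ u ∈ e, ∃ v ∈ e, c u ≠ c v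

/-- `f 0, f 1, …, f (r-1)` is an `r`-chain of edges of `E`: consecutive edges meet
in exactly one vertex and non-consecutive edges are disjoint. -/
def IsRChain {V : Type*} [DecidableEq V] (r : ℕ) (E : Finset (Finset V))
    (f : ℕ → Finset V) : Prop :=
  (∀ i < r, f i ∈ E) ∧
  (∀ i, i + 1 < r → (f i ∩ f (i + 1)).card = 1) ∧
  (∀ i j, j < r → i + 1 < j → f i ∩ f j = ∅)

/-- An `r`-chain is conflicting under `t` if, for each `i`, the last vertex of
`f i` (largest `t`-value) is the first vertex of `f (i+1)` (smallest `t`-value). -/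
def IsConflictingChain {V : Type*} (r : ℕ) (t : V → ℝ) (f : ℕ → Finset V) : Prop :=
  ∀ i, i + 1 < r → ∃ v, v ∈ f i ∧ v ∈ f (i + 1) ∧
    (∀ w ∈ f i, t w ≤ t v) ∧ (∀ w ∈ f (i + 1), t v ≤ t w)

/-- The length of an edge `e` under `t`:
`max_{v ∈ e} t v − min_{v ∈ e} t v`. -/
noncomputable def edgeLength {V : Type*} (t : V → ℝ) (e : Finset V) : ℝ :=
  sSup (t '' ↑e) - sInf (t '' ↑e)

open Finset

section Greedy

variable {V α : Type*} [LinearOrder α]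

def IsBlockedColor (E : Finset (Finset V)) (t : V → α) (c : V → ℕ) (i : ℕ) (v : V) : Prop :=
  ∃ e ∈ E, v ∈ e ∧ (∀ w ∈ e, t w ≤ t v) ∧ ∀ w ∈ e, w ≠ v → c w = i

def IsGreedyColoring (E : Finset (Finset V)) (t : V → α) (c : V → ℕ) : Prop :=
  ∀ v, c v = sInf {i | ¬ IsBlockedColor E t c i v}

/- Quantifying over `e : E` (rather than `e ∈ E`) keeps `e ∈ E` in the context of the
recursive call, which the termination proof needs. -/
noncomputable def greedyColor (E : Finset (Finset V)) (t : V → α) (v : V) : ℕ :=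
  sInf {i | ¬ ∃ e : E, v ∈ (e : Finset V) ∧ (∀ w ∈ (e : Finset V), t w ≤ t v) ∧
    ∀ w ∈ (e : Finset V), t w < t v → greedyColor E t w = i}
termination_by ∑ e ∈ E, #{w ∈ e | t w < t v}
decreasing_by
  have hsub (s : Finset V) : {x ∈ s | t x < t w} ⊆ {x ∈ s | t x < t v} :=
    monotone_filter_right s fun x _ hx => hx.trans ‹_›
  exact sum_lt_sum (fun s _ => card_le_card (hsub s))
    ⟨e, e.2, card_lt_card <| (ssubset_iff_of_subset (hsub e)).2 ⟨w, by simp [*], by simp⟩⟩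

variable {E : Finset (Finset V)} {t : V → α}

theorem first_ne_last (ht : Function.Injective t) {e : Finset V} (he : 2 ≤ #e) {a b : V}
    (ha : ∀ w ∈ e, t a ≤ t w) (hb : ∀ w ∈ e, t w ≤ t b) : a ≠ b := by
  rintro rfl
  obtain ⟨x, hx, hxa⟩ := exists_mem_ne he a
  exact hxa (ht ((hb x hx).antisymm (ha x hx)))

theorem isGreedyColoring_greedyColor (E : Finset (Finset V)) (ht : Function.Injective t) :
    IsGreedyColoring E t (greedyColor E t) := by
  intro v
  rw [greedyColor]
  congr! 3 with i
  simp only [IsBlockedColor, Subtype.exists, exists_prop]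
  refine not_congr <| exists_congr fun e => and_congr_right fun _ => and_congr_right fun _ =>
    and_congr_right fun hlast => forall₂_congr fun w hw => ?_
  exact imp_congr_left ⟨ne_of_apply_ne t ∘ ne_of_lt, fun h => (hlast w hw).lt_of_ne (ht.ne h)⟩

theorem finite_setOf_isBlockedColor (hE : ∀ e ∈ E, 2 ≤ #e) (c : V → ℕ) (v : V) :
    {i | IsBlockedColor E t c i v}.Finite := by
  classical
  refine ((E.biUnion id).image c).finite_toSet.subset ?_
  rintro i ⟨e, he, hv, -, hcol⟩
  obtain ⟨w, hw, hwv⟩ := exists_mem_ne (hE e he) v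
  exact mem_image.2 ⟨w, mem_biUnion.2 ⟨e, he, hw⟩, hcol w hw hwv⟩

namespace IsGreedyColoring

variable {c : V → ℕ}

theorem isBlockedColor_of_lt (hc : IsGreedyColoring E t c) {i : ℕ} {v : V} (hi : i < c v) :
    IsBlockedColor E t c i v := by
  rw [hc v] at hi
  simpa using Nat.notMem_of_lt_sInf hi

theorem not_isBlockedColor (hc : IsGreedyColoring E t c) (hE : ∀ e ∈ E, 2 ≤ #e) (v : V) :
    ¬ IsBlockedColor E t c (c v) v := by
  rw [hc v]
  exact Nat.sInf_mem (finite_setOf_isBlockedColor hE c v).infinite_compl.nonempty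

theorem exists_color_ne (hc : IsGreedyColoring E t c) (hE : ∀ e ∈ E, 2 ≤ #e) {e : Finset V}
    (he : e ∈ E) : ∃ u ∈ e, ∃ v ∈ e, c u ≠ c v := by
  obtain ⟨v, hv, hlast⟩ := e.exists_max_image t (card_pos.1 (by grind [hE e he]))
  have := hc.not_isBlockedColor hE v
  simp only [IsBlockedColor, not_exists, not_and, not_forall] at this
  obtain ⟨w, hw, -, hwv⟩ := this e he hv hlast
  exact ⟨w, hw, v, hv, hwv⟩

end IsGreedyColoring

structure IsGreedyChain (E : Finset (Finset V)) (t : V → α) (c : V → ℕ) (f : ℕ → Finset V)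
    (g : ℕ → V) (k : ℕ) : Prop where
  mem : ∀ j ≤ k, f j ∈ E
  mem_last : ∀ j ≤ k, g j ∈ f j
  le_last : ∀ j ≤ k, ∀ w ∈ f j, t w ≤ t (g j)
  color_eq : ∀ j ≤ k, ∀ w ∈ f j, w ≠ g j → c w = j
  last_mem_succ : ∀ j < k, g j ∈ f (j + 1)
  last_le_succ : ∀ j < k, ∀ w ∈ f (j + 1), t (g j) ≤ t w

namespace IsGreedyChain

variable {c : V → ℕ} {f : ℕ → Finset V} {g : ℕ → V} {k : ℕ}

theorem extend (h : IsGreedyChain E t c f g k) {e : Finset V} {u : V} (he : e ∈ E)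
    (hu : u ∈ e) (hlast : ∀ w ∈ e, t w ≤ t u) (hcol : ∀ w ∈ e, w ≠ u → c w = k + 1)
    (hmem : g k ∈ e) (hfirst : ∀ w ∈ e, t (g k) ≤ t w) :
    IsGreedyChain E t c (Function.update f (k + 1) e) (Function.update g (k + 1) u) (k + 1) := by
  have hf (j) (hj : j ≤ k) : Function.update f (k + 1) e j = f j :=
    Function.update_of_ne (by omega) ..
  have hg (j) (hj : j ≤ k) : Function.update g (k + 1) u j = g j :=
    Function.update_of_ne (by omega) ..
  constructor
  · intro j hj
    rcases Nat.of_le_succ hj with hj | rfl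
    · simpa [hf j hj] using h.mem j hj
    · simpa
  · intro j hj
    rcases Nat.of_le_succ hj with hj | rfl
    · simpa [hf j hj, hg j hj] using h.mem_last j hj
    · simpa
  · intro j hj
    rcases Nat.of_le_succ hj with hj | rfl
    · simpa [hf j hj, hg j hj] using h.le_last j hj
    · simpa
  · intro j hj
    rcases Nat.of_le_succ hj with hj | rfl
    · simpa [hf j hj, hg j hj] using h.color_eq j hj
    · simpa
  · intro j hj
    rcases Nat.lt_succ_iff_lt_or_eq.1 hj with hj | rfl
    · simpa [hf (j + 1) hj, hg j hj.le] using h.last_mem_succ j hj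
    · simpa [hg j le_rfl]
  · intro j hj
    rcases Nat.lt_succ_iff_lt_or_eq.1 hj with hj | rfl
    · simpa [hf (j + 1) hj, hg j hj.le] using h.last_le_succ j hj
    · simpa [hg j le_rfl]

theorem color_last (h : IsGreedyChain E t c f g k) (ht : Function.Injective t)
    (hE : ∀ e ∈ E, 2 ≤ #e) {j : ℕ} (hj : j < k) : c (g j) = j + 1 :=
  h.color_eq (j + 1) hj _ (h.last_mem_succ j hj) <|
    first_ne_last ht (hE _ (h.mem (j + 1) hj)) (h.last_le_succ j hj) (h.le_last (j + 1) hj)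

theorem le_color (h : IsGreedyChain E t c f g k) (ht : Function.Injective t)
    (hE : ∀ e ∈ E, 2 ≤ #e) (hk : k ≤ c (g k)) {j : ℕ} (hj : j ≤ k) {w : V} (hw : w ∈ f j) :
    j ≤ c w := by
  by_cases hwg : w = g j
  · subst hwg
    rcases hj.lt_or_eq with hj | rfl
    · rw [h.color_last ht hE hj]; omega
    · exact hk
  · rw [h.color_eq j hj w hw hwg]

theorem color_le (h : IsGreedyChain E t c f g k) (ht : Function.Injective t)
    (hE : ∀ e ∈ E, 2 ≤ #e) {j : ℕ} (hj : j < k) {w : V} (hw : w ∈ f j) : c w ≤ j + 1 := by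
  by_cases hwg : w = g j
  · rw [hwg, h.color_last ht hE hj]
  · rw [h.color_eq j hj.le w hw hwg]; omega

theorem isRChain [DecidableEq V] (h : IsGreedyChain E t c f g k) (ht : Function.Injective t)
    (hE : ∀ e ∈ E, 2 ≤ #e) (hk : k ≤ c (g k)) : IsRChain (k + 1) E f := by
  refine ⟨fun j hj => h.mem j (by omega), fun j hj => ?_, fun i j hj hij => ?_⟩
  · rw [card_eq_one]
    refine ⟨g j, eq_singleton_iff_unique_mem.2 ⟨mem_inter.2 ⟨h.mem_last j (by omega),
      h.last_mem_succ j (by omega)⟩, fun w hw => ?_⟩⟩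
    rw [mem_inter] at hw
    by_contra hwg
    have := h.le_color ht hE hk (by omega) hw.2
    rw [h.color_eq j (by omega) w hw.1 hwg] at this
    omega
  · refine eq_empty_of_forall_notMem fun w hw => ?_
    rw [mem_inter] at hw
    have := h.color_le ht hE (by omega) hw.1
    have := h.le_color ht hE hk (by omega) hw.2
    omega

end IsGreedyChain

theorem IsGreedyColoring.exists_isGreedyChain {c : V → ℕ} (hc : IsGreedyColoring E t c)
    (ht : Function.Injective t) (hE : ∀ e ∈ E, 2 ≤ #e) (k : ℕ) (u : V) (hk : k < c u) :
    ∃ f g, IsGreedyChain E t c f g k ∧ g k = u := by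
  induction k generalizing u with
  | zero =>
    obtain ⟨e, he, hu, hlast, hcol⟩ := hc.isBlockedColor_of_lt hk
    refine ⟨fun _ => e, fun _ => u, ⟨?_, ?_, ?_, ?_, ?_, ?_⟩, rfl⟩ <;> intro j hj
    all_goals first | omega | (obtain rfl : j = 0 := by omega); assumption
  | succ k ih =>
    obtain ⟨e, he, hu, hlast, hcol⟩ := hc.isBlockedColor_of_lt hk
    obtain ⟨m, hm, hfirst⟩ := e.exists_min_image t ⟨u, hu⟩
    have hmu : m ≠ u := first_ne_last ht (hE e he) hfirst hlast
    obtain ⟨f, g, hfg, rfl⟩ := ih m (by rw [hcol m hm hmu]; omega)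
    exact ⟨_, _, hfg.extend he hu hlast hcol hm hfirst, Function.update_self ..⟩

end Greedy

section Conflicting

variable {V : Type*} {E : Finset (Finset V)} {t : V → ℝ} {c : V → ℕ}

theorem IsGreedyChain.isConflictingChain {f : ℕ → Finset V} {g : ℕ → V} {k : ℕ}
    (h : IsGreedyChain E t c f g k) : IsConflictingChain (k + 1) t f := fun j hj =>
  ⟨g j, h.mem_last j (by omega), h.last_mem_succ j (by omega), h.le_last j (by omega),
    h.last_le_succ j (by omega)⟩

theorem IsGreedyColoring.exists_isRChain_isConflictingChain [DecidableEq V]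
    (hc : IsGreedyColoring E t c) (ht : Function.Injective t) (hE : ∀ e ∈ E, 2 ≤ #e) {k : ℕ}
    {u : V} (hk : k ≤ c u) : ∃ f, IsRChain k E f ∧ IsConflictingChain k t f := by
  cases k with
  | zero => exact ⟨fun _ => ∅, ⟨by simp, by simp, by simp⟩, by simp [IsConflictingChain]⟩
  | succ k =>
    obtain ⟨f, g, hfg, rfl⟩ := hc.exists_isGreedyChain ht hE k u hk
    exact ⟨f, hfg.isRChain ht hE (by omega), hfg.isConflictingChain⟩

end Conflicting

theorem r_colorable_of_good_assignment_general (r n : ℕ) (hn : 2 ≤ n)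
    (V : Type) [DecidableEq V] (E : Finset (Finset V)) (hE : ∀ e ∈ E, e.card = n)
    (t : V → ℝ) (ht : Function.Injective t)
    (hconf : ¬ ∃ f : ℕ → Finset V, IsRChain r E f ∧ IsConflictingChain r t f) :
    IsRColorable r E := by
  have hE₂ : ∀ e ∈ E, 2 ≤ #e := fun e he => hE e he ▸ hn
  have hc := isGreedyColoring_greedyColor E ht
  have hlt (v : V) : greedyColor E t v < r := by
    by_contra! hv
    exact hconf (hc.exists_isRChain_isConflictingChain ht hE₂ hv)
  refine ⟨fun v => ⟨greedyColor E t v, hlt v⟩, fun e he => ?_⟩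
  obtain ⟨u, hu, v, hv, huv⟩ := hc.exists_color_ne hE₂ he
  exact ⟨u, hu, v, hv, fun h => huv (congrArg Fin.val h)⟩

/-- If there is an injective birth-time assignment `t : V → [0,1]` under which no
edge of an `n`-uniform hypergraph is short (every edge has length at least
`(1-p)/r`) and no `r`-chain is conflicting, then the hypergraph is `r`-colorable. -/
theorem r_colorable_of_good_assignment (r n : ℕ) (hr : 2 ≤ r) (hn : 2 ≤ n)
    (V : Type) [DecidableEq V] (E : Finset (Finset V)) (hE : ∀ e ∈ E, e.card = n)
    (p : ℝ) (hp : p ∈ Set.Ioo (0 : ℝ) 1)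
    (t : V → ℝ) (ht : Function.Injective t) (ht01 : ∀ v, t v ∈ Set.Icc (0 : ℝ) 1)
    (hshort : ∀ e ∈ E, (1 - p) / r ≤ edgeLength t e)
    (hconf : ¬ ∃ f : ℕ → Finset V, IsRChain r E f ∧ IsConflictingChain r t f) :
    IsRColorable r E :=
  r_colorable_of_good_assignment_general r n hn V E hE t ht hconf
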